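/- arXiv:1702.05217 — 3 statements merged into one kernel-verified Lean document; each statement's English description precedes it below -/
import Mathlib

section
/- Let Q be a positive integer, and consider items with profits p_k = w_k = s_k for positive integers s_1, …, s_m with total weight capacity W = Q, v_max = 2, v_min = 1, ν = (v_max - v_min)/W, and R = Q. Then a binary vector x ∈ {0,1}^m satisfies ∑_k s_k x_k ≤ Q and ∑_k p_k x_k - R/(v_max - ν·∑_k w_k x_k) ≥ 0 if and only if ∑_k s_k x_k = Q. -/
/-!
Write `S = ∑ s_k x_k`. Clearing denominators, the benefit is
`S - Q / (2 - S / Q) = -(S - Q)² / (2Q - S)`, and under the capacity constraint `S ≤ Q` the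
denominator is positive, so the benefit is never positive and vanishes exactly when `S = Q`.
-/

section Benefit

variable {K : Type*} [Field K] {S Q : K}

theorem sub_div_two_sub_eq_neg_sq_div (hQ : Q ≠ 0) (hS : 2 * Q - S ≠ 0) :
    S - Q / (2 - 1 / Q * S) = -(S - Q) ^ 2 / (2 * Q - S) := by
  have hden : 2 - 1 / Q * S = (2 * Q - S) / Q := by field_simp
  rw [hden, div_div_eq_mul_div, eq_div_iff hS, sub_mul, div_mul_cancel₀ _ hS]
  ring

theorem sub_div_two_sub_nonneg_iff [LinearOrder K] [IsStrictOrderedRing K]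
    (hQ : 0 < Q) (hS : S ≤ Q) :
    0 ≤ S - Q / (2 - 1 / Q * S) ↔ S = Q := by
  have hden : 0 < 2 * Q - S := by linarith
  rw [sub_div_two_sub_eq_neg_sq_div hQ.ne' hden.ne', neg_div, neg_nonneg,
    div_le_iff₀ hden, zero_mul, sq_nonpos_iff, sub_eq_zero]

end Benefit

theorem subsetSum_reduction_constrained_general (m : ℕ) (s : Fin m → ℕ)
    (Q : ℕ) (hQ : 0 < Q) (x : Fin m → ℝ) :
    ((∑ k, (s k : ℝ) * x k) ≤ (Q : ℝ) ∧
      0 ≤ (∑ k, (s k : ℝ) * x k) -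
        (Q : ℝ) / (2 - (1 / (Q : ℝ)) * ∑ k, (s k : ℝ) * x k)) ↔
    (∑ k, (s k : ℝ) * x k) = (Q : ℝ) := by
  have hQ' : (0 : ℝ) < Q := by exact_mod_cast hQ
  constructor
  · rintro ⟨hcap, hbenefit⟩
    exact (sub_div_two_sub_nonneg_iff hQ' hcap).1 hbenefit
  · intro hsum
    exact ⟨hsum.le, (sub_div_two_sub_nonneg_iff hQ' hsum.le).2 hsum⟩

/-- Correctness of the capacity-constrained subset-sum reduction: with
`p_k = w_k = s_k`, `W = Q`, `v_max = 2`, `v_min = 1`, `ν = (v_max - v_min)/W = 1/Q`,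
`R = Q`, a binary vector `x` satisfies `∑ s_k x_k ≤ Q` and
`∑ p_k x_k - R/(v_max - ν·∑ w_k x_k) ≥ 0` iff `∑ s_k x_k = Q`. -/
theorem subsetSum_reduction_constrained (m : ℕ) (s : Fin m → ℕ) (hs : ∀ k, 0 < s k)
    (Q : ℕ) (hQ : 0 < Q) (x : Fin m → ℝ) (hx : ∀ k, x k = 0 ∨ x k = 1) :
    ((∑ k, (s k : ℝ) * x k) ≤ (Q : ℝ) ∧
      0 ≤ (∑ k, (s k : ℝ) * x k) -
        (Q : ℝ) / (2 - (1 / (Q : ℝ)) * ∑ k, (s k : ℝ) * x k)) ↔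
    (∑ k, (s k : ℝ) * x k) = (Q : ℝ) :=
  subsetSum_reduction_constrained_general m s Q hQ x
end

section
/- Let β be defined recursively by: for the first item e_{ij} in the lexicographic order, β(i,j,0) = B(∅), β(i,j,w_{ij}) = B(e_{ij}), and β(i,j,k) = -∞ otherwise; and for each subsequent item e_{ij} with predecessor e_{i'j'}, β(i,j,k) = max{ β(i',j',k), β(i',j',k - w_{ij}) + p_{ij} - R·d_{in}·(1/(v_max - ν k) - 1/(v_max - ν(k - w_{ij}))) }. Then β(i,j,k) equals the maximum benefit B(x) over all selections x supported on items e_{ab} ⪯ e_{ij} with total weight exactly k (and -∞ if no such selection exists). -/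
/-!
Adding to a selection an item `a` that lies at or after every selected item leaves the load
on the edges before its city `c a` unchanged and raises it from `k - w a` to `k` on every
later edge, so the benefit grows by an amount that depends only on `a` and the new weight
`k`. Since items are processed in route order, a best selection of weight `k` among the
first `t + 2` items therefore either omits item `t + 1` or is item `t + 1` added to a best
selection of weight `k - w (t + 1)` among the first `t + 1` items: this is the recursion
satisfied by `β`.
-/

/-- Weight carried on edge `i` (from city `i` to `i+1`) when the items in `S`
(item `j` located at city `c j`) are selected. -/
noncomputable def pwtLoad (w : ℕ → ℝ) (c : ℕ → ℕ) (S : Finset ℕ) (i : ℕ) : ℝ :=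
  ∑ j ∈ S.filter (fun j => c j ≤ i), w j

/-- Total travel time of the vehicle along the `n` edges with distances `d`,
carrying the items of `S`. -/
noncomputable def pwtT (n : ℕ) (d w : ℕ → ℝ) (c : ℕ → ℕ) (vmax ν : ℝ) (S : Finset ℕ) : ℝ :=
  ∑ i ∈ Finset.range n, d i / (vmax - ν * pwtLoad w c S i)

/-- PWT benefit `B(x) = P(x) - R·T(x)` of the selection `S`. -/
noncomputable def pwtB (n : ℕ) (d p w : ℕ → ℝ) (c : ℕ → ℕ) (vmax ν R : ℝ)
    (S : Finset ℕ) : ℝ :=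
  (∑ j ∈ S, p j) - R * pwtT n d w c vmax ν S

open Finset

section BestValue

variable {α : Type*} (B : Finset α → ℝ) (w : α → ℝ)

noncomputable def bestValue (s : Finset α) (k : ℝ) : EReal :=
  sSup {b : EReal | ∃ S : Finset α, S ⊆ s ∧ (∑ j ∈ S, w j) = k ∧ b = ((B S : ℝ) : EReal)}

variable {B w}

lemma le_bestValue {s S : Finset α} (hS : S ⊆ s) {k : ℝ} (hk : ∑ j ∈ S, w j = k) :
    ((B S : ℝ) : EReal) ≤ bestValue B w s k :=
  le_sSup ⟨S, hS, hk, rfl⟩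

lemma bestValue_mono {s t : Finset α} (hst : s ⊆ t) (k : ℝ) :
    bestValue B w s k ≤ bestValue B w t k :=
  sSup_le fun _ ⟨_, hS, hk, hb⟩ => hb ▸ le_bestValue (hS.trans hst) hk

lemma bestValue_empty (k : ℝ) :
    bestValue B w ∅ k = if k = 0 then ((B ∅ : ℝ) : EReal) else ⊥ := by
  split_ifs with hk <;> simp [bestValue, hk, eq_comm (a := (0 : ℝ))]

lemma bestValue_insert [DecidableEq α] {a : α} {s : Finset α} (ha : a ∉ s) {k δ : ℝ}
    (hB : ∀ S ⊆ s, ∑ j ∈ S, w j = k - w a → B (insert a S) = B S + δ) :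
    bestValue B w (insert a s) k = max (bestValue B w s k) (bestValue B w s (k - w a) + δ) := by
  have hδ_bot : (δ : EReal) ≠ ⊥ ∨ bestValue B w (insert a s) k ≠ ⊥ := .inl (EReal.coe_ne_bot δ)
  have hδ_top : (δ : EReal) ≠ ⊤ ∨ bestValue B w (insert a s) k ≠ ⊤ := .inl (EReal.coe_ne_top δ)
  apply le_antisymm
  · refine sSup_le fun _ ⟨S, hS, hk, hb⟩ => hb ▸ ?_
    by_cases haS : a ∈ S
    · have hS' : S.erase a ⊆ s := subset_insert_iff.mp hS
      have hk' : ∑ j ∈ S.erase a, w j = k - w a := by rw [sum_erase_eq_sub haS, hk]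
      have hBS : B S = B (S.erase a) + δ := by rw [← hB _ hS' hk', insert_erase haS]
      rw [hBS, EReal.coe_add]
      exact le_max_of_le_right (add_le_add_left (le_bestValue hS' hk') _)
    · exact le_max_of_le_left (le_bestValue ((subset_insert_iff_of_notMem haS).mp hS) hk)
  · refine max_le (bestValue_mono (subset_insert a s) k) ?_
    rw [← EReal.le_sub_iff_add_le hδ_bot hδ_top]
    refine sSup_le fun _ ⟨S, hS, hk, hb⟩ => hb ▸ ?_
    have haS : a ∉ S := fun h => ha (hS h)
    rw [EReal.le_sub_iff_add_le hδ_bot hδ_top, ← EReal.coe_add, ← hB S hS hk]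
    exact le_bestValue (insert_subset_insert a hS) (by rw [sum_insert haS, hk]; ring)

lemma bestValue_singleton [DecidableEq α] {a : α} (ha : w a ≠ 0) (k : ℝ) :
    bestValue B w {a} k =
      if k = 0 then ((B ∅ : ℝ) : EReal) else if k = w a then ((B {a} : ℝ) : EReal) else ⊥ := by
  have hB : ∀ S ⊆ (∅ : Finset α), ∑ j ∈ S, w j = k - w a →
      B (insert a S) = B S + (B {a} - B ∅) := by
    intro S hS _
    rw [subset_empty.mp hS]
    simp
  have h := bestValue_insert (notMem_empty a) hB
  rw [insert_empty] at h
  rw [h, bestValue_empty, bestValue_empty]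
  by_cases hk : k = 0
  · simp [hk, ha]
  · by_cases hka : k = w a
    · simp [hka, ha, -EReal.coe_sub, ← EReal.coe_add]
    · simp [hk, hka, sub_eq_zero]

end BestValue

section Benefit

variable {n : ℕ} {d p w : ℕ → ℝ} {c : ℕ → ℕ} {vmax ν R : ℝ}

lemma pwtLoad_insert_of_lt {a : ℕ} {S : Finset ℕ} {i : ℕ} (hi : i < c a) :
    pwtLoad w c (insert a S) i = pwtLoad w c S i := by
  rw [pwtLoad, pwtLoad, filter_insert, if_neg (by omega)]

lemma pwtLoad_of_forall_le {S : Finset ℕ} {i : ℕ} (hS : ∀ j ∈ S, c j ≤ i) :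
    pwtLoad w c S i = ∑ j ∈ S, w j := by
  rw [pwtLoad, filter_true_of_mem hS]

lemma pwtT_insert {a : ℕ} {S : Finset ℕ} (ha : a ∉ S) (hS : ∀ j ∈ S, c j ≤ c a) :
    pwtT n d w c vmax ν (insert a S) = pwtT n d w c vmax ν S +
      (∑ l ∈ Ico (c a) n, d l) *
        (1 / (vmax - ν * (∑ j ∈ S, w j + w a)) - 1 / (vmax - ν * ∑ j ∈ S, w j)) := by
  have hIco : (range n).filter (c a ≤ ·) = Ico (c a) n := by
    ext i
    simp only [mem_filter, mem_range, mem_Ico]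
    omega
  rw [← sub_eq_iff_eq_add', pwtT, pwtT, ← sum_sub_distrib, ← hIco, sum_filter, sum_mul]
  refine sum_congr rfl fun i _ => ?_
  split_ifs with hi
  · have hS_le : ∀ j ∈ S, c j ≤ i := fun j hj => (hS j hj).trans hi
    have hins_le : ∀ j ∈ insert a S, c j ≤ i := by
      simpa only [forall_mem_insert] using ⟨hi, hS_le⟩
    rw [pwtLoad_of_forall_le hins_le, pwtLoad_of_forall_le hS_le, sum_insert ha, add_comm (w a)]
    ring
  · rw [pwtLoad_insert_of_lt (not_le.mp hi), sub_self, zero_mul]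

lemma pwtB_insert {a : ℕ} {S : Finset ℕ} (ha : a ∉ S) (hS : ∀ j ∈ S, c j ≤ c a) :
    pwtB n d p w c vmax ν R (insert a S) = pwtB n d p w c vmax ν R S +
      (p a - R * (∑ l ∈ Ico (c a) n, d l) *
        (1 / (vmax - ν * (∑ j ∈ S, w j + w a)) - 1 / (vmax - ν * ∑ j ∈ S, w j))) := by
  rw [pwtB, pwtB, sum_insert ha, pwtT_insert ha hS]
  ring

end Benefit

theorem pwt_dynamic_programming_correct_general (n m : ℕ)
    (d p w : ℕ → ℝ) (c : ℕ → ℕ) (hmono : Monotone c)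
    (hw : ∀ j < m, 0 < w j)
    (vmax ν R : ℝ)
    (β : ℕ → ℝ → EReal)
    (hbase : ∀ k : ℝ, β 0 k =
      if k = 0 then ((pwtB n d p w c vmax ν R ∅ : ℝ) : EReal)
      else if k = w 0 then ((pwtB n d p w c vmax ν R {0} : ℝ) : EReal)
      else ⊥)
    (hstep : ∀ t : ℕ, t + 1 < m → ∀ k : ℝ,
      β (t + 1) k = max (β t k)
        (β t (k - w (t + 1)) +
          ((p (t + 1) - R * (∑ l ∈ Finset.Ico (c (t + 1)) n, d l) *
            (1 / (vmax - ν * k) - 1 / (vmax - ν * (k - w (t + 1))))) : ℝ))) :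
    ∀ t < m, ∀ k : ℝ,
      β t k = sSup {b : EReal | ∃ S : Finset ℕ, S ⊆ Finset.range (t + 1) ∧
        (∑ j ∈ S, w j) = k ∧ b = ((pwtB n d p w c vmax ν R S : ℝ) : EReal)} := by
  suffices h : ∀ t < m, ∀ k, β t k = bestValue (pwtB n d p w c vmax ν R) w (range (t + 1)) k from h
  intro t ht
  induction t with
  | zero =>
    intro k
    rw [hbase k, range_one, bestValue_singleton (hw 0 ht).ne']
  | succ t ih =>
    intro k
    have hB : ∀ S ⊆ range (t + 1), ∑ j ∈ S, w j = k - w (t + 1) →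
        pwtB n d p w c vmax ν R (insert (t + 1) S) = pwtB n d p w c vmax ν R S +
          (p (t + 1) - R * (∑ l ∈ Ico (c (t + 1)) n, d l) *
            (1 / (vmax - ν * k) - 1 / (vmax - ν * (k - w (t + 1))))) := by
      intro S hS hk
      have hc : ∀ j ∈ S, c j ≤ c (t + 1) := fun j hj => hmono (mem_range.mp (hS hj)).le
      rw [pwtB_insert (fun h => notMem_range_self (hS h)) hc, hk, sub_add_cancel]
    rw [hstep t ht k, ih (by omega), ih (by omega), range_add_one (n := t + 1),
      bestValue_insert notMem_range_self hB]

/-- Correctness of the dynamic program (Theorem 1): items `0, 1, …, m-1` are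
processed in route (lexicographic) order, i.e. their city indices `c` are
nondecreasing.  If `β` satisfies the DP recursion — base case
`β 0 0 = B(∅)`, `β 0 (w 0) = B({0})`, `β 0 k = -∞` otherwise, and step
`β (t+1) k = max { β t k,
  β t (k - w(t+1)) + p(t+1) - R·d_in·(1/(v_max - νk) - 1/(v_max - ν(k - w(t+1)))) }`
where `d_in = ∑_{l=c(t+1)}^{n-1} d l` — then `β t k` equals the maximum benefit
`B(x)` over all selections supported on the first `t+1` items with total weight
exactly `k` (and `-∞` if no such selection exists). -/
theorem pwt_dynamic_programming_correct (n m : ℕ) (hm : 0 < m)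
    (d p w : ℕ → ℝ) (c : ℕ → ℕ) (hmono : Monotone c) (hc : ∀ j < m, c j < n)
    (hd : ∀ i < n, 0 < d i) (hp : ∀ j < m, 0 < p j) (hw : ∀ j < m, 0 < w j)
    (vmax ν R : ℝ) (hvmax : 0 < vmax) (hν : 0 < ν) (hR : 0 < R)
    (hcap : ν * (∑ j ∈ Finset.range m, w j) < vmax)
    (β : ℕ → ℝ → EReal)
    (hbase : ∀ k : ℝ, β 0 k =
      if k = 0 then ((pwtB n d p w c vmax ν R ∅ : ℝ) : EReal)
      else if k = w 0 then ((pwtB n d p w c vmax ν R {0} : ℝ) : EReal)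
      else ⊥)
    (hstep : ∀ t : ℕ, t + 1 < m → ∀ k : ℝ,
      β (t + 1) k = max (β t k)
        (β t (k - w (t + 1)) +
          ((p (t + 1) - R * (∑ l ∈ Finset.Ico (c (t + 1)) n, d l) *
            (1 / (vmax - ν * k) - 1 / (vmax - ν * (k - w (t + 1))))) : ℝ))) :
    ∀ t < m, ∀ k : ℝ,
      β t k = sSup {b : EReal | ∃ S : Finset ℕ, S ⊆ Finset.range (t + 1) ∧
        (∑ j ∈ S, w j) = k ∧ b = ((pwtB n d p w c vmax ν R S : ℝ) : EReal)} :=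
  pwt_dynamic_programming_correct_general n m d p w c hmono hw vmax ν R β hbase hstep
end

section
/- Removing dominated entries preserves optimality: if for weights k' < k we have β(i,j,k') ≥ β(i,j,k), then for every extension of a solution of weight k by items e_{ab} ≻ e_{ij}, the same extension applied to the solution of weight k' yields benefit at least as large. Hence deleting dominated entries from the DP table does not change the optimal value computed in the final column. -/
lemma div_sub_increment_le_of_le {d v a b h : ℝ} (hd : 0 ≤ d) (hh : 0 ≤ h) (hab : a ≤ b)
    (hcap : b + h < v) :
    d / (v - (a + h)) - d / (v - a) ≤ d / (v - (b + h)) - d / (v - b) := by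
  have increment_eq : ∀ x, x + h < v →
      d / (v - (x + h)) - d / (v - x) = d * h / ((v - (x + h)) * (v - x)) := by
    intro x hx
    have : 0 < v - (x + h) := by linarith
    have : 0 < v - x := by linarith
    field_simp
    ring
  rw [increment_eq a (by linarith), increment_eq b hcap]
  apply div_le_div_of_nonneg_left (by positivity)
  · exact mul_pos (by linarith) (by linarith)
  · exact mul_le_mul (by linarith) (by linarith) (by linarith) (by linarith)

section Load

variable {w : ℕ → ℝ} {c : ℕ → ℕ}

lemma pwtLoad_union {S E : Finset ℕ} (h : Disjoint S E) (i : ℕ) :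
    pwtLoad w c (S ∪ E) i = pwtLoad w c S i + pwtLoad w c E i := by
  rw [pwtLoad, pwtLoad, pwtLoad, Finset.filter_union,
    Finset.sum_union (h.mono (Finset.filter_subset _ _) (Finset.filter_subset _ _))]

lemma pwtLoad_nonneg (hw : ∀ j, 0 ≤ w j) (S : Finset ℕ) (i : ℕ) : 0 ≤ pwtLoad w c S i :=
  Finset.sum_nonneg fun j _ => hw j

lemma pwtLoad_le_sum (hw : ∀ j, 0 ≤ w j) (S : Finset ℕ) (i : ℕ) :
    pwtLoad w c S i ≤ ∑ j ∈ S, w j :=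
  Finset.sum_le_sum_of_subset_of_nonneg (Finset.filter_subset _ _) fun j _ _ => hw j

lemma pwtLoad_eq_sum_of_pwtLoad_ne_zero {T E : Finset ℕ} {i : ℕ}
    (horder : ∀ a ∈ T, ∀ b ∈ E, c a ≤ c b) (hE : pwtLoad w c E i ≠ 0) :
    pwtLoad w c T i = ∑ j ∈ T, w j := by
  obtain ⟨b, hb⟩ : (E.filter fun j => c j ≤ i).Nonempty := by
    by_contra hempty
    rw [Finset.not_nonempty_iff_eq_empty] at hempty
    exact hE (by rw [pwtLoad, hempty, Finset.sum_empty])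
  rw [Finset.mem_filter] at hb
  rw [pwtLoad, Finset.filter_true_of_mem fun a ha => (horder a ha b hb.1).trans hb.2]

end Load

lemma pwtT_union_sub_le (n : ℕ) {d w : ℕ → ℝ} {c : ℕ → ℕ} {vmax ν : ℝ}
    (hd : ∀ i, 0 ≤ d i) (hw : ∀ j, 0 ≤ w j) (hν : 0 ≤ ν) {S S' E : Finset ℕ}
    (hSE : Disjoint S E) (hS'E : Disjoint S' E) (horder : ∀ a ∈ S ∪ S', ∀ b ∈ E, c a ≤ c b)
    (hweight : ∑ j ∈ S', w j ≤ ∑ j ∈ S, w j)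
    (hcap : ν * ((∑ j ∈ S, w j) + (∑ j ∈ E, w j)) < vmax) :
    pwtT n d w c vmax ν (S' ∪ E) - pwtT n d w c vmax ν S' ≤
      pwtT n d w c vmax ν (S ∪ E) - pwtT n d w c vmax ν S := by
  rw [pwtT, pwtT, pwtT, pwtT, ← Finset.sum_sub_distrib, ← Finset.sum_sub_distrib]
  refine Finset.sum_le_sum fun i _ => ?_
  rw [pwtLoad_union hSE, pwtLoad_union hS'E]
  by_cases hE : pwtLoad w c E i = 0
  · simp only [hE, add_zero, sub_self, le_refl]
  rw [pwtLoad_eq_sum_of_pwtLoad_ne_zero (fun a ha => horder a (Finset.mem_union_left _ ha)) hE,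
    pwtLoad_eq_sum_of_pwtLoad_ne_zero (fun a ha => horder a (Finset.mem_union_right _ ha)) hE,
    mul_add, mul_add]
  apply div_sub_increment_le_of_le (hd i) (mul_nonneg hν (pwtLoad_nonneg hw E i))
    (mul_le_mul_of_nonneg_left hweight hν)
  rw [← mul_add]
  exact lt_of_le_of_lt
    (mul_le_mul_of_nonneg_left (add_le_add_right (pwtLoad_le_sum hw E i) _) hν) hcap

/-- Removing dominated entries preserves optimality: if the solution `S'` has
smaller weight `k' < k` and at least the benefit of `S` (i.e. the entry of `S`
is dominated), then for every extension by a set `E` of later items (items whose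
cities come no earlier than all items of `S ∪ S'`), extending `S'` yields
benefit at least as large as extending `S`.  Hence deleting dominated entries
from the DP table does not change the optimal value computed in the final
column. -/
theorem pwt_dominated_entries_removable (n : ℕ) (d p w : ℕ → ℝ) (c : ℕ → ℕ)
    (vmax ν R : ℝ) (hd : ∀ i, 0 ≤ d i) (hw : ∀ j, 0 ≤ w j)
    (hR : 0 ≤ R) (hν : 0 ≤ ν)
    (S S' E : Finset ℕ) (hSE : Disjoint S E) (hS'E : Disjoint S' E)
    (horder : ∀ a ∈ S ∪ S', ∀ b ∈ E, c a ≤ c b)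
    (hweight : (∑ j ∈ S', w j) < (∑ j ∈ S, w j))
    (hbenefit : pwtB n d p w c vmax ν R S ≤ pwtB n d p w c vmax ν R S')
    (hcap : ν * ((∑ j ∈ S, w j) + (∑ j ∈ E, w j)) < vmax) :
    pwtB n d p w c vmax ν R (S ∪ E) ≤ pwtB n d p w c vmax ν R (S' ∪ E) := by
  have hT := pwtT_union_sub_le n hd hw hν hSE hS'E horder hweight.le hcap
  rw [pwtB, pwtB] at hbenefit ⊢
  rw [Finset.sum_union hSE, Finset.sum_union hS'E]
  linarith [mul_le_mul_of_nonneg_left hT hR]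
end
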